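/- Let A be a Banach algebra, B a C*-algebra, and i : A → B a continuous injective algebra homomorphism with dense range such that A is holomorphically closed in B, i.e., A is closed under holomorphic functional calculus. Then for any n, an element of GLₙ(A) is invertible in Mₙ(B), and conversely any invertible element of Mₙ(B) lying in Mₙ(A) is invertible in Mₙ(A); in particular the spectrum of a ∈ A relative to A equals its spectrum relative to B. -/

import Mathlib

set_option maxHeartbeats 1000000

open Matrix

attribute [local instance] Matrix.linftyOpNormedRing Matrix.linftyOpNormedAlgebra
  Matrix.linftyOpNormedAddCommGroup

private instance matrixComplete {ι B : Type*} [Fintype ι] [NormedRing B] [CompleteSpace B] :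
    @CompleteSpace (Matrix ι ι B) (Matrix.linftyOpNormedAddCommGroup (m := ι) (n := ι) (α := B)).toUniformSpace :=
  inferInstanceAs (CompleteSpace (ι → ι → B))

private lemma entry_norm_le {ι κ B : Type*} [Fintype ι] [Fintype κ] [NormedRing B]
    (M : Matrix ι κ B) (k : ι) (l : κ) : ‖M k l‖ ≤ ‖M‖ := by
  rw [Matrix.linfty_opNorm_def]
  have h1 : ‖M k l‖₊ ≤ ∑ j, ‖M k j‖₊ :=
    Finset.single_le_sum (f := fun j => ‖M k j‖₊) (fun _ _ => zero_le) (Finset.mem_univ l)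
  have h2 : (∑ j, ‖M k j‖₊) ≤ Finset.univ.sup fun k' => ∑ j, ‖M k' j‖₊ :=
    Finset.le_sup (f := fun k' => ∑ j, ‖M k' j‖₊) (Finset.mem_univ k)
  exact_mod_cast h1.trans h2

private lemma norm_le_of_entry_le {ι κ B : Type*} [Fintype ι] [Fintype κ] [NormedRing B]
    (M : Matrix ι κ B) (ε : ℝ) (hε : 0 ≤ ε) (h : ∀ k l, ‖M k l‖ ≤ ε) :
    ‖M‖ ≤ Fintype.card κ * ε := by
  have hc : (0:ℝ) ≤ (Fintype.card κ) * ε := by positivity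
  have hle : (Finset.univ.sup fun k : ι => ∑ j : κ, ‖M k j‖₊) ≤ (⟨_, hc⟩ : NNReal) := by
    refine Finset.sup_le fun k _ => ?_
    show ((∑ j : κ, ‖M k j‖₊ : NNReal) : ℝ) ≤ (Fintype.card κ : ℝ) * ε
    rw [NNReal.coe_sum]
    calc (∑ j : κ, (‖M k j‖₊ : ℝ)) = ∑ j : κ, ‖M k j‖ := by simp [coe_nnnorm]
    _ ≤ ∑ _j : κ, ε := Finset.sum_le_sum fun j _ => h k j
    _ = Fintype.card κ * ε := by
        simp [Finset.sum_const, Finset.card_univ, nsmul_eq_mul]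
  calc ‖M‖ = _ := Matrix.linfty_opNorm_def M
  _ ≤ ((⟨_, hc⟩ : NNReal) : ℝ) := NNReal.coe_le_coe.mpr hle
  _ = _ := NNReal.coe_mk ..

private lemma isUnit_one_by_one {R : Type*} [Ring R] (m : Matrix (Fin 1) (Fin 1) R)
    (h : IsUnit (m 0 0)) : IsUnit m := by
  obtain ⟨u, hu⟩ := h
  refine ⟨⟨m, Matrix.of fun _ _ => ↑u⁻¹, ?_, ?_⟩, rfl⟩ <;>
  · ext k l
    fin_cases k; fin_cases l
    simp [Matrix.mul_apply, ← hu]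

private lemma isUnit_fromBlocks_diag {l n α : Type*} [Fintype l] [Fintype n]
    [DecidableEq l] [DecidableEq n] [Ring α]
    (a : Matrix l l α) (s : Matrix n n α) [Invertible a] :
    IsUnit (fromBlocks a 0 0 s) ↔ IsUnit s := by
  have hone : (1 : Matrix (l ⊕ n) (l ⊕ n) α).toBlocks₂₂ = 1 := by
    ext k l
    by_cases h : k = l <;>
      simp [Matrix.toBlocks₂₂, Matrix.one_apply, h]
  constructor
  · intro h
    obtain ⟨u, hu⟩ := h
    have h1 : fromBlocks a 0 0 s * (u⁻¹).val = 1 := by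
      rw [← hu]; exact u.mul_inv
    have h2 : (u⁻¹).val * fromBlocks a 0 0 s = 1 := by
      rw [← hu]; exact u.inv_mul
    set E : Matrix (l ⊕ n) (l ⊕ n) α := (u⁻¹).val with hE
    rw [← fromBlocks_toBlocks E, fromBlocks_multiply] at h1 h2
    have e1 := congrArg Matrix.toBlocks₂₂ h1
    have e2 := congrArg Matrix.toBlocks₂₂ h2
    rw [toBlocks_fromBlocks₂₂, hone] at e1 e2
    rw [Matrix.zero_mul, zero_add] at e1
    rw [Matrix.mul_zero, zero_add] at e2
    exact ⟨⟨s, E.toBlocks₂₂, e1, e2⟩, rfl⟩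
  · intro h
    letI := h.invertible
    refine ⟨⟨fromBlocks a 0 0 s, fromBlocks (⅟a) 0 0 (⅟s), ?_, ?_⟩, rfl⟩ <;>
    · rw [fromBlocks_multiply, ← fromBlocks_one]
      congr 1 <;> simp

private lemma isUnit_fromBlocks_iff_schur {l n α : Type*} [Fintype l] [Fintype n]
    [DecidableEq l] [DecidableEq n] [Ring α]
    (a : Matrix l l α) (b : Matrix l n α) (c : Matrix n l α) (d : Matrix n n α)
    [Invertible a] :
    IsUnit (fromBlocks a b c d) ↔ IsUnit (d - c * ⅟a * b) := by
  have hdecomp : fromBlocks a b c d =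
      fromBlocks 1 0 (c * ⅟a) 1 * fromBlocks a 0 0 (d - c * ⅟a * b) *
        fromBlocks 1 (⅟a * b) 0 1 := by
    simp only [fromBlocks_multiply, Matrix.mul_zero, Matrix.zero_mul, add_zero, zero_add,
      Matrix.one_mul, Matrix.mul_one, invOf_mul_self, Matrix.mul_invOf_cancel_left,
      Matrix.invOf_mul_cancel_right, Matrix.mul_assoc, add_sub_cancel]
  have hL : ∀ X : Matrix n l α,
      ∃ L : (Matrix (l ⊕ n) (l ⊕ n) α)ˣ,
        L.val = fromBlocks 1 0 X 1 := by
    intro X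
    refine ⟨⟨fromBlocks 1 0 X 1, fromBlocks 1 0 (-X) 1, ?_, ?_⟩, rfl⟩ <;>
    · rw [fromBlocks_multiply, ← fromBlocks_one]
      congr 1 <;> simp
  have hU : ∀ X : Matrix l n α,
      ∃ U : (Matrix (l ⊕ n) (l ⊕ n) α)ˣ,
        U.val = fromBlocks 1 X 0 1 := by
    intro X
    refine ⟨⟨fromBlocks 1 X 0 1, fromBlocks 1 (-X) 0 1, ?_, ?_⟩, rfl⟩ <;>
    · rw [fromBlocks_multiply, ← fromBlocks_one]
      congr 1 <;> simp
  obtain ⟨L, hLeq⟩ := hL (c * ⅟a)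
  obtain ⟨U, hUeq⟩ := hU (⅟a * b)
  rw [hdecomp, ← hLeq, ← hUeq, Units.isUnit_mul_units, Units.isUnit_units_mul]
  exact isUnit_fromBlocks_diag a _

/-- Spectral invariance: if `A` is a Banach algebra continuously, injectively and
densely embedded in a C*-algebra `B` and `A` is holomorphically closed (inverse
closed) in `B`, then invertibility in matrix algebras over `A` agrees with
invertibility in matrix algebras over `B`, and spectra agree. -/
theorem spectral_invariance_holomorphically_closed
    {A B : Type} [NormedRing A] [NormedAlgebra ℂ A] [CompleteSpace A]
    [NormedRing B] [StarRing B] [CStarRing B] [NormedAlgebra ℂ B] [CompleteSpace B]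
    (i : A →ₐ[ℂ] B) (hcont : Continuous i) (hinj : Function.Injective i)
    (hdense : DenseRange i)
    (hclosed : ∀ a : A, IsUnit (i a) → IsUnit a) :
    (∀ n : ℕ, ∀ M : Matrix (Fin n) (Fin n) A,
        IsUnit M ↔ IsUnit (i.mapMatrix M)) ∧
    (∀ a : A, spectrum ℂ a = spectrum ℂ (i a)) := by
  have hIsUnit : ∀ a : A, IsUnit a ↔ IsUnit (i a) := fun a => ⟨fun h => h.map i, hclosed a⟩
  have hspec : ∀ a : A, spectrum ℂ a = spectrum ℂ (i a) := by
    intro a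
    ext z
    rw [spectrum.mem_iff, spectrum.mem_iff, not_iff_not, hIsUnit, map_sub, AlgHom.commutes]
  refine ⟨?_, hspec⟩
  have key : ∀ (n : ℕ) (ι : Type) (_ : Fintype ι) (_ : DecidableEq ι),
      Fintype.card ι = n → ∀ x : Matrix ι ι A, IsUnit (x.map ⇑i) → IsUnit x := by
    intro n
    induction n with
    | zero =>
      intro ι _ _ hcard x _
      haveI : IsEmpty ι := Fintype.card_eq_zero_iff.mp hcard
      exact ⟨⟨x, x, Matrix.ext fun k _ => isEmptyElim k,
        Matrix.ext fun k _ => isEmptyElim k⟩, rfl⟩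
    | succ n IH =>
      intro ι _ _ hcard x hx
      -- the "near the identity" lemma
      have near : ∀ w : Matrix ι ι A, ‖(1 : Matrix ι ι B) - w.map ⇑i‖ < 1 → IsUnit w := by
        intro w hw
        have hcard2 : Fintype.card ι = Fintype.card (Fin 1 ⊕ Fin n) := by
          simp [hcard]; omega
        let e : ι ≃ (Fin 1 ⊕ Fin n) := Fintype.equivOfCardEq hcard2
        set v : Matrix (Fin 1 ⊕ Fin n) (Fin 1 ⊕ Fin n) A := (reindexAlgEquiv ℂ A e) w with hv
        suffices hsv : IsUnit v by
          have := hsv.map (reindexAlgEquiv ℂ A e).symm.toAlgHom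
          simpa [hv] using this
        have hmapv : v.map ⇑i = (reindexAlgEquiv ℂ B e) (w.map ⇑i) := by
          ext k l
          simp [hv, Matrix.map_apply, reindexAlgEquiv_apply, reindex_apply,
            submatrix_apply]
        -- B-side invertibility of w.map i
        have hwB : IsUnit (w.map ⇑i) := by
          have := (Units.oneSub ((1 : Matrix ι ι B) - w.map ⇑i) hw).isUnit
          simpa [sub_sub_cancel] using this
        have hvB : IsUnit (v.map ⇑i) := by
          rw [hmapv]; exact hwB.map _
        -- corner invertibility
        have hcornerB : IsUnit (i (w (e.symm (Sum.inl 0)) (e.symm (Sum.inl 0)))) := by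
          have hentry : ‖((1 : Matrix ι ι B) - w.map ⇑i) (e.symm (Sum.inl 0))
              (e.symm (Sum.inl 0))‖ ≤ ‖(1 : Matrix ι ι B) - w.map ⇑i‖ :=
            entry_norm_le _ _ _
          have h1 : ((1 : Matrix ι ι B) - w.map ⇑i) (e.symm (Sum.inl 0)) (e.symm (Sum.inl 0)) =
              1 - i (w (e.symm (Sum.inl 0)) (e.symm (Sum.inl 0))) := by
            simp [Matrix.sub_apply, Matrix.one_apply_eq, Matrix.map_apply]
          rw [h1] at hentry
          have := (Units.oneSub _ (lt_of_le_of_lt hentry hw)).isUnit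
          simpa [sub_sub_cancel] using this
        have hcorner : IsUnit (w (e.symm (Sum.inl 0)) (e.symm (Sum.inl 0))) :=
          hclosed _ hcornerB
        -- blocks of v
        set a := v.toBlocks₁₁ with hadef
        set b := v.toBlocks₁₂ with hbdef
        set c := v.toBlocks₂₁ with hcdef
        set d := v.toBlocks₂₂ with hddef
        have ha : IsUnit a := by
          apply isUnit_one_by_one
          have : a 0 0 = w (e.symm (Sum.inl 0)) (e.symm (Sum.inl 0)) := by
            simp [hadef, hv, Matrix.toBlocks₁₁]
          rw [this]; exact hcorner
        letI hai : Invertible a := ha.invertible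
        have haB : IsUnit (a.map ⇑i) := by
          have := ha.map i.mapMatrix
          rwa [AlgHom.mapMatrix_apply] at this
        letI haiB : Invertible (a.map ⇑i) := haB.invertible
        have hinvmap : (⅟a).map ⇑i = ⅟(a.map ⇑i) := by
          refine (invOf_eq_left_inv ?_).symm
          have h1 : ((⅟a) * a).map ⇑i = (⅟a).map ⇑i * a.map ⇑i :=
            Matrix.map_mul (f := i.toRingHom)
          rw [← h1, invOf_mul_self]
          exact Matrix.map_one ⇑i (map_zero i) (map_one i)
        have hvblocks : v = fromBlocks a b c d := (fromBlocks_toBlocks v).symm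
        have hmapblocks : v.map ⇑i =
            fromBlocks (a.map ⇑i) (b.map ⇑i) (c.map ⇑i) (d.map ⇑i) := by
          rw [hvblocks]; exact fromBlocks_map a b c d ⇑i
        -- B-side Schur complement is invertible
        rw [hmapblocks, isUnit_fromBlocks_iff_schur] at hvB
        -- it is the image of the A-side Schur complement
        have hsmap : (d - c * ⅟a * b).map ⇑i =
            d.map ⇑i - c.map ⇑i * ⅟(a.map ⇑i) * b.map ⇑i := by
          rw [← hinvmap]
          rw [Matrix.map_sub ⇑i (fun x y => map_sub i x y)]
          congr 1
          have h3 : (c * ⅟a * b).map ⇑i = (c * ⅟a).map ⇑i * b.map ⇑i :=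
            Matrix.map_mul (f := i.toRingHom)
          have h4 : (c * ⅟a).map ⇑i = c.map ⇑i * (⅟a).map ⇑i :=
            Matrix.map_mul (f := i.toRingHom)
          rw [h3, h4]
        rw [← hsmap] at hvB
        -- apply the induction hypothesis
        have hs : IsUnit (d - c * ⅟a * b) :=
          IH (Fin n) _ _ (Fintype.card_fin n) _ hvB
        rw [hvblocks, isUnit_fromBlocks_iff_schur]
        exact hs
      -- density argument
      obtain ⟨U, hU⟩ := hx
      set cι : ℕ := Fintype.card ι with hcι
      set ε : ℝ := (2 * (cι + 1) * (‖x.map ⇑i‖ + 1))⁻¹ with hεdef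
      have hεpos : 0 < ε := by
        rw [hεdef]; positivity
      have hz : ∀ k l : ι, ∃ a : A, ‖i a - (U⁻¹).val k l‖ < ε := by
        intro k l
        obtain ⟨a, ha⟩ := Metric.denseRange_iff.mp hdense ((U⁻¹).val k l) ε hεpos
        exact ⟨a, by rwa [dist_comm, dist_eq_norm] at ha⟩
      choose z hzspec using hz
      set zM : Matrix ι ι A := Matrix.of z with hzM
      have hdiff : ‖zM.map ⇑i - (U⁻¹).val‖ ≤ cι * ε := by
        refine norm_le_of_entry_le _ _ hεpos.le fun k l => ?_
        exact (hzspec k l).le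
      have hnum : (cι : ℝ) * ε * ‖x.map ⇑i‖ < 1 := by
        have hD : (0:ℝ) < 2 * (cι + 1) * (‖x.map ⇑i‖ + 1) := by positivity
        rw [hεdef]
        rw [show (cι : ℝ) * (2 * (cι + 1) * (‖x.map ⇑i‖ + 1))⁻¹ * ‖x.map ⇑i‖ =
          ((cι : ℝ) * ‖x.map ⇑i‖) / (2 * (cι + 1) * (‖x.map ⇑i‖ + 1)) by ring]
        rw [div_lt_one hD]
        nlinarith [norm_nonneg (x.map ⇑i), Nat.cast_nonneg (α := ℝ) cι]
      have hprod : ‖zM.map ⇑i - (U⁻¹).val‖ * ‖x.map ⇑i‖ < 1 :=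
        lt_of_le_of_lt (mul_le_mul_of_nonneg_right hdiff (norm_nonneg _)) hnum
      have hprod' : ‖x.map ⇑i‖ * ‖zM.map ⇑i - (U⁻¹).val‖ < 1 := by rwa [mul_comm]
      have hmul1 : (zM * x).map ⇑i = zM.map ⇑i * x.map ⇑i :=
        Matrix.map_mul (f := i.toRingHom)
      have hmul2 : (x * zM).map ⇑i = x.map ⇑i * zM.map ⇑i :=
        Matrix.map_mul (f := i.toRingHom)
      have hYX : (U⁻¹).val * x.map ⇑i = 1 := by rw [← hU]; exact U.inv_mul
      have hXY : x.map ⇑i * (U⁻¹).val = 1 := by rw [← hU]; exact U.mul_inv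
      have h1 : ‖(1 : Matrix ι ι B) - (zM * x).map ⇑i‖ < 1 := by
        rw [hmul1, show (1 : Matrix ι ι B) - zM.map ⇑i * x.map ⇑i =
          ((U⁻¹).val - zM.map ⇑i) * x.map ⇑i by rw [sub_mul, hYX]]
        calc ‖((U⁻¹).val - zM.map ⇑i) * x.map ⇑i‖
            ≤ ‖(U⁻¹).val - zM.map ⇑i‖ * ‖x.map ⇑i‖ := norm_mul_le _ _
        _ = ‖zM.map ⇑i - (U⁻¹).val‖ * ‖x.map ⇑i‖ := by rw [norm_sub_rev]
        _ < 1 := hprod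
      have h2 : ‖(1 : Matrix ι ι B) - (x * zM).map ⇑i‖ < 1 := by
        rw [hmul2, show (1 : Matrix ι ι B) - x.map ⇑i * zM.map ⇑i =
          x.map ⇑i * ((U⁻¹).val - zM.map ⇑i) by rw [mul_sub, hXY]]
        calc ‖x.map ⇑i * ((U⁻¹).val - zM.map ⇑i)‖
            ≤ ‖x.map ⇑i‖ * ‖(U⁻¹).val - zM.map ⇑i‖ := norm_mul_le _ _
        _ = ‖x.map ⇑i‖ * ‖zM.map ⇑i - (U⁻¹).val‖ := by rw [norm_sub_rev]
        _ < 1 := hprod'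
      have hzx : IsUnit (zM * x) := near _ h1
      have hxz : IsUnit (x * zM) := near _ h2
      -- conclude that x is a unit
      obtain ⟨u, hu⟩ := hzx
      obtain ⟨u', hu'⟩ := hxz
      have hLx : ((u⁻¹).val * zM) * x = 1 := by
        rw [mul_assoc, ← hu]; exact u.inv_mul
      have hxR : x * (zM * (u'⁻¹).val) = 1 := by
        rw [← mul_assoc, ← hu']; exact u'.mul_inv
      have hLR : ((u⁻¹).val * zM : Matrix ι ι A) = zM * (u'⁻¹).val := by
        calc ((u⁻¹).val * zM : Matrix ι ι A)
            = ((u⁻¹).val * zM) * (x * (zM * (u'⁻¹).val)) := by rw [hxR, mul_one]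
        _ = (((u⁻¹).val * zM) * x) * (zM * (u'⁻¹).val) := (mul_assoc _ _ _).symm
        _ = zM * (u'⁻¹).val := by rw [hLx, one_mul]
      exact ⟨⟨x, (u⁻¹).val * zM, by rw [hLR]; exact hxR, hLx⟩, rfl⟩
  intro n M
  constructor
  · exact fun h => h.map i.mapMatrix
  · intro h
    refine key n (Fin n) _ _ (Fintype.card_fin n) M ?_
    rwa [AlgHom.mapMatrix_apply] at h
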